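/- arXiv:1806.01800 — 2 statements merged into one kernel-verified Lean document; each statement's English description precedes it below -/
import Mathlib

section
/- Let X be an object of B with α ∈ F(X), β ∈ F(X)* such that ⟨β, α⟩ = 1, and let ψ = λ_{XX}(β, α), an idempotent in End_B(X). Then the image of ψ^♯ in Fun(B^op, Vect) (which exists since this functor category is abelian) is isomorphic to F; moreover μ_X(α) : X^♯ → F and λ_X(β) : F → X^♯ give the projection onto and inclusion of this summand. -/
open CategoryTheory Opposite

universe u

variable {k : Type u} [Field k] {B : Type u} [Category.{u} B] [Preadditive B]
  [CategoryTheory.Linear k B]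
/-- Corollary `isoidem`. Let `X` be an object of `B` with `α ∈ F(X)`,
`β ∈ F(X)*` such that `⟨β, α⟩ = 1`, and let `ψ = λ_{XX}(β, α)`, an idempotent in `End_B(X)`.
Then the image of `ψ^♯` in `Fun(Bᵒᵖ, Vect)` (which exists since this functor category is
abelian) is isomorphic to `F`; moreover `μ_X(α) : X^♯ → F` and `λ_X(β) : F → X^♯` give the
projection onto and inclusion of this summand. -/
theorem stmt4 (F : Bᵒᵖ ⥤ ModuleCat.{u} k)
    (μ : ∀ X : B, F.obj (op X) → (((linearYoneda k B).obj X) ⟶ F))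
    (hμ : ∀ (X : B) (α : F.obj (op X)) (Z : B) (η : Z ⟶ X),
      ((μ X α).app (op Z)) η = (F.map η.op) α)
    (lam : ∀ Y : B, Module.Dual k (F.obj (op Y)) → (F ⟶ ((linearYoneda k B).obj Y)))
    (hopp : ∀ (Y : B) (β : Module.Dual k (F.obj (op Y))) (α : F.obj (op Y)),
      lam Y β ≫ μ Y α = β α • 𝟙 F)
    (X : B) (α : F.obj (op X)) (β : Module.Dual k (F.obj (op X))) (hβα : β α = 1)
    (ψ : X ⟶ X) (hψ : ψ = (((lam X β).app (op X)) α : X ⟶ X)) :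
    ∃ e : Limits.image ((linearYoneda k B).map ψ) ≅ F,
      Limits.factorThruImage ((linearYoneda k B).map ψ) ≫ e.hom = μ X α ∧
      e.inv ≫ Limits.image.ι ((linearYoneda k B).map ψ) = lam X β := by
  have h1 : lam X β ≫ μ X α = 𝟙 F := by rw [hopp, hβα, one_smul]
  have comm : μ X α ≫ lam X β = (linearYoneda k B).map ψ := by
    ext Z η
    have nat := congrArg (fun f => f α) ((lam X β).naturality (η.op : op X ⟶ Z))
    have e1 : (μ X α).app Z η = F.map η.op α := hμ X α Z.unop η
    show (lam X β).app Z ((μ X α).app Z η) = _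
    rw [e1]
    refine nat.trans ?_
    show ((linearYoneda k B).obj X).map η.op ((lam X β).app (op X) α) = _
    rw [hψ]
    rfl
  haveI : IsSplitEpi (μ X α) := ⟨⟨⟨lam X β, h1⟩⟩⟩
  haveI : Mono (lam X β) := mono_of_mono_fac h1
  haveI : StrongEpi (μ X α) := strongEpi_of_epi _
  refine ⟨(Limits.image.isoStrongEpiMono (μ X α) (lam X β) comm).symm, ?_, ?_⟩
  · rw [← cancel_mono (lam X β)]
    rw [Category.assoc, Iso.symm_hom, Limits.image.isoStrongEpiMono_inv_comp_mono,
      Limits.image.fac, comm]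
  · rw [Iso.symm_inv, Limits.image.isoStrongEpiMono_hom_comp_ι]
end

section
/- The tube category T(C) of a modular tensor category C, with objects those of C, Hom_{T(C)}(X, Y) = ⊕_{R ∈ Irr(C)} Hom_C(R⊗X, Y⊗R), composition given by (g ∘ f)_T = Σ_{S,R,b} (id_Z ⊗ b*) ∘ (g_S ⊗ id_R) ∘ (id_S ⊗ f_R) ∘ (b ⊗ id_X) where b ranges over a basis of Hom_C(T, S⊗R) with dual basis b*, and identity on X the element with R-component δ_{R,1} id_X, is a k-linear category (composition is well-defined, bilinear, associative, and unital). -/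
open CategoryTheory CategoryTheory.Limits CategoryTheory.MonoidalCategory

universe u

/-- Data of a spherical (pivotal) structure on a rigid monoidal `k`-linear category:
a chosen (left and right) dual for every object, with evaluation/coevaluation maps on both
sides satisfying the zigzag identities, an identification `End(𝟙) ≃ k`, and the sphericality
axiom (left trace = right trace). -/
structure Spherical (k : Type u) (C : Type u) [Field k] [Category.{u} C] [Preadditive C]
    [CategoryTheory.Linear k C] [MonoidalCategory C] where
  dual : C → C
  ev : ∀ X : C, dual X ⊗ X ⟶ 𝟙_ C
  coev : ∀ X : C, 𝟙_ C ⟶ X ⊗ dual X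
  ev' : ∀ X : C, X ⊗ dual X ⟶ 𝟙_ C
  coev' : ∀ X : C, 𝟙_ C ⟶ dual X ⊗ X
  zig₁ : ∀ X : C, (dual X ◁ coev X) ≫ (α_ (dual X) X (dual X)).inv ≫ (ev X ▷ dual X)
      = (ρ_ (dual X)).hom ≫ (λ_ (dual X)).inv
  zig₂ : ∀ X : C, (coev X ▷ X) ≫ (α_ X (dual X) X).hom ≫ (X ◁ ev X)
      = (λ_ X).hom ≫ (ρ_ X).inv
  zig₃ : ∀ X : C, (X ◁ coev' X) ≫ (α_ X (dual X) X).inv ≫ (ev' X ▷ X)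
      = (ρ_ X).hom ≫ (λ_ X).inv
  zig₄ : ∀ X : C, (coev' X ▷ dual X) ≫ (α_ (dual X) X (dual X)).hom ≫ (dual X ◁ ev' X)
      = (λ_ (dual X)).hom ≫ (ρ_ (dual X)).inv
  toUnit : (𝟙_ C ⟶ 𝟙_ C) ≃ₗ[k] k
  toUnit_one : toUnit (𝟙 (𝟙_ C)) = 1
  spherical : ∀ {X : C} (f : X ⟶ X),
    coev' X ≫ (dual X ◁ f) ≫ ev X = coev X ≫ (f ▷ dual X) ≫ ev' X

variable {k : Type u} [Field k] {C : Type u} [Category.{u} C] [Preadditive C]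
  [CategoryTheory.Linear k C] [MonoidalCategory C]

/-- The spherical trace `tr(f) ∈ k` of an endomorphism. -/
def Spherical.tr (S : Spherical k C) {X : C} (f : X ⟶ X) : k :=
  S.toUnit (S.coev' X ≫ (S.dual X ◁ f) ≫ S.ev X)

/-- The quantum dimension `d(X) = tr(id_X)`. -/
def Spherical.dim (S : Spherical k C) (X : C) : k := S.tr (𝟙 X)

/-- The partial trace over the (leftmost) factor `X` of a morphism `X ⊗ A ⟶ X ⊗ B`:
close the `X`-strand to the left using the duality of `X`. -/
def Spherical.ptr (S : Spherical k C) {X A B : C} (h : X ⊗ A ⟶ X ⊗ B) : A ⟶ B :=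
  (λ_ A).inv ≫ (S.coev' X ▷ A) ≫ (α_ (S.dual X) X A).hom ≫ (S.dual X ◁ h) ≫
    (α_ (S.dual X) X B).inv ≫ (S.ev X ▷ B) ≫ (λ_ B).hom

/-- Composition in the tube category `T(C)`: morphisms `X ⟶ Y` are families
`f = (f_R)_{R ∈ Irr(C)}` with `f_R : R ⊗ X ⟶ Y ⊗ R`, and `(g ∘ f)_T` is given by summing
over simples `S, R` and a basis `b` of `Hom(T, S⊗R)` with dual basis `b*`, glueing `f_R`
and `g_S` along `b`, `b*`. -/
def tubeComp {ι : Type u} [Fintype ι] (Ss : ι → C)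
    (κ : ι → ι → ι → Type u) [∀ t s r, Fintype (κ t s r)]
    (Bb : ∀ t s r, κ t s r → (Ss t ⟶ Ss s ⊗ Ss r))
    (Bd : ∀ t s r, κ t s r → (Ss s ⊗ Ss r ⟶ Ss t))
    {X Y Z : C} (f : ∀ r, Ss r ⊗ X ⟶ Y ⊗ Ss r) (g : ∀ s, Ss s ⊗ Y ⟶ Z ⊗ Ss s) :
    ∀ t, Ss t ⊗ X ⟶ Z ⊗ Ss t := fun t =>
  ∑ s : ι, ∑ r : ι, ∑ p : κ t s r,
    (Bb t s r p ▷ X) ≫ (α_ (Ss s) (Ss r) X).hom ≫ (Ss s ◁ f r) ≫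
      (α_ (Ss s) Y (Ss r)).inv ≫ (g s ▷ Ss r) ≫ (α_ Z (Ss s) (Ss r)).hom ≫
      (Z ◁ Bd t s r p)

/-- The identity of `X` in the tube category: the family whose `R`-component is
`δ_{R,1} · id_X` (via a chosen isomorphism `u : Ss i0 ≅ 𝟙`). -/
def tubeId {ι : Type u} [DecidableEq ι] (Ss : ι → C) (i0 : ι) (u : Ss i0 ≅ 𝟙_ C) (X : C) :
    ∀ r, Ss r ⊗ X ⟶ X ⊗ Ss r := fun r =>
  if h : r = i0 then
    ((eqToHom (congrArg Ss h) ≫ u.hom) ▷ X) ≫ (λ_ X).hom ≫ (ρ_ X).inv ≫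
      (X ◁ (u.inv ≫ eqToHom (congrArg Ss h).symm))
  else 0


lemma dualSystem_exchange {k : Type u} [Field k] {V W M : Type u}
    [AddCommGroup V] [Module k V] [AddCommGroup W] [Module k W]
    [AddCommGroup M] [Module k M]
    (p : V →ₗ[k] W →ₗ[k] k) (B : V →ₗ[k] W →ₗ[k] M)
    (hnd : ∀ w, (∀ v, p v w = 0) → w = 0)
    {I J : Type u} [Fintype I] [Fintype J] [DecidableEq I] [DecidableEq J]
    (c : I → V) (d : I → W) (c' : J → V) (d' : J → W)
    (hc : Submodule.span k (Set.range c) = ⊤)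
    (hc' : Submodule.span k (Set.range c') = ⊤)
    (hcd : ∀ i i', p (c i) (d i') = if i = i' then 1 else 0)
    (hcd' : ∀ j j', p (c' j) (d' j') = if j = j' then 1 else 0) :
    ∑ i, B (c i) (d i) = ∑ j, B (c' j) (d' j) := by
  -- coefficients
  have ha : ∀ j, ∃ a : I → k, ∑ i, a i • c i = c' j := by
    intro j
    have : c' j ∈ Submodule.span k (Set.range c) := by rw [hc]; trivial
    exact (Submodule.mem_span_range_iff_exists_fun k).1 this
  have hb : ∀ i, ∃ b : J → k, ∑ j, b j • c' j = c i := by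
    intro i
    have : c i ∈ Submodule.span k (Set.range c') := by rw [hc']; trivial
    exact (Submodule.mem_span_range_iff_exists_fun k).1 this
  choose a haa using ha
  choose b hbb using hb
  -- Fact2 : p (c i) (d' j) = b i j
  have fact2 : ∀ i j, p (c i) (d' j) = b i j := by
    intro i j
    rw [← hbb i]
    simp [map_sum, hcd']
  -- p (c' j) (d i) = a j i
  have fact1 : ∀ j i, p (c' j) (d i) = a j i := by
    intro j i
    rw [← haa j]
    simp [map_sum, hcd]
  -- Fact4 : ∑ j, b i j * a j i' = δ
  have fact4 : ∀ i i', (∑ j, b i j * a j i') = if i = i' then 1 else 0 := by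
    intro i i'
    calc (∑ j, b i j * a j i') = ∑ j, b i j * p (c' j) (d i') := by
          simp [fact1]
      _ = p (c i) (d i') := by rw [← hbb i]; simp [map_sum, mul_comm]
      _ = _ := hcd i i'
  -- d' j = ∑ i, b i j • d i
  have hd' : ∀ j, d' j = ∑ i, b i j • d i := by
    intro j
    have key : ∀ v, p v (d' j - ∑ i, b i j • d i) = 0 := by
      intro v
      have hsub : Submodule.span k (Set.range c) ≤
          LinearMap.ker (p.flip (d' j - ∑ i, b i j • d i)) := by
        rw [Submodule.span_le]
        rintro _ ⟨l, rfl⟩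
        simp only [SetLike.mem_coe, LinearMap.mem_ker, LinearMap.flip_apply]
        simp [map_sum, fact2, hcd]
      have : v ∈ Submodule.span k (Set.range c) := by rw [hc]; trivial
      simpa using hsub this
    exact (sub_eq_zero.mp (hnd _ key))
  have expand : ∀ j, B (c' j) (d' j) = ∑ i, ∑ i', (a j i * b i' j) • B (c i) (d i') := by
    intro j
    rw [← haa j, hd' j]
    simp only [map_sum, map_smul, LinearMap.sum_apply, LinearMap.smul_apply,
      Finset.smul_sum, smul_smul]
    rw [Finset.sum_comm]
    exact Finset.sum_congr rfl fun i _ => Finset.sum_congr rfl fun i' _ => by rw [mul_comm]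
  symm
  calc ∑ j, B (c' j) (d' j) = ∑ j, ∑ i, ∑ i', (a j i * b i' j) • B (c i) (d i') :=
        Finset.sum_congr rfl fun j _ => expand j
    _ = ∑ i, ∑ i', (∑ j, a j i * b i' j) • B (c i) (d i') := by
        rw [Finset.sum_comm]
        refine Finset.sum_congr rfl fun i _ => ?_
        rw [Finset.sum_comm]
        refine Finset.sum_congr rfl fun i' _ => ?_
        rw [Finset.sum_smul]
    _ = ∑ i, B (c i) (d i) := by
        refine Finset.sum_congr rfl fun i _ => ?_
        rw [Finset.sum_eq_single i]
        · have h1 : (∑ j, a j i * b i j) = 1 := by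
            have h := fact4 i i; rw [if_pos rfl] at h; rw [← h]
            exact Finset.sum_congr rfl fun j _ => mul_comm _ _
          rw [h1, one_smul]
        · intro i' _ hne
          have h0 : (∑ j, a j i * b i' j) = 0 := by
            have h := fact4 i' i
            rw [if_neg hne] at h
            rw [← h]; exact Finset.sum_congr rfl fun j _ => mul_comm _ _
          rw [h0, zero_smul]
        · simp
set_option linter.unusedSectionVars false
section Aux
variable {k : Type u} [Field k] {C : Type u} [Category.{u} C] [Preadditive C]
  [CategoryTheory.Linear k C] [MonoidalCategory C]
variable {ι : Type u} {Ss : ι → C}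

lemma endo_scalar (e : ∀ i, (Ss i ⟶ Ss i) ≃ₗ[k] k) (he : ∀ i, e i (𝟙 (Ss i)) = 1)
    (i : ι) (φ : Ss i ⟶ Ss i) : φ = e i φ • 𝟙 (Ss i) := by
  apply (e i).injective
  rw [map_smul, he, smul_eq_mul, mul_one]

lemma e_comp (e : ∀ i, (Ss i ⟶ Ss i) ≃ₗ[k] k) (he : ∀ i, e i (𝟙 (Ss i)) = 1)
    (i : ι) (φ ψ : Ss i ⟶ Ss i) : e i (φ ≫ ψ) = e i φ * e i ψ := by
  conv_lhs => rw [endo_scalar e he i φ, endo_scalar e he i ψ]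
  rw [Linear.smul_comp, Linear.comp_smul, Category.comp_id, smul_smul, map_smul, he,
    smul_eq_mul, mul_one]

lemma no_retract (e : ∀ i, (Ss i ⟶ Ss i) ≃ₗ[k] k) (he : ∀ i, e i (𝟙 (Ss i)) = 1)
    (hsimp : ∀ i, Simple (Ss i))
    (hdist : ∀ i j, i ≠ j → ¬ Nonempty (Ss i ≅ Ss j))
    {t r : ι} (hne : t ≠ r) (A : Ss t ⟶ Ss r) (B : Ss r ⟶ Ss t)
    (hAB : A ≫ B = 𝟙 (Ss t)) : False := by
  set c := e r (B ≫ A) with hc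
  have hBA : B ≫ A = c • 𝟙 (Ss r) := endo_scalar e he r _
  have hBABA : (B ≫ A) ≫ (B ≫ A) = B ≫ A := by
    rw [Category.assoc, ← Category.assoc A B, hAB, Category.id_comp]
  have hidem : c * c = c := by
    rw [hc, ← e_comp e he, hBABA]
  by_cases h0 : c = 0
  · -- then B ≫ A = 0, so 𝟙 = (A≫B)≫(A≫B) = A≫(B≫A)≫B = 0
    have hz : B ≫ A = 0 := by rw [hBA, h0, zero_smul]
    have hid : 𝟙 (Ss t) = 0 := by
      calc 𝟙 (Ss t) = (A ≫ B) ≫ (A ≫ B) := by rw [hAB, Category.id_comp]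
        _ = A ≫ (B ≫ A) ≫ B := by simp [Category.assoc]
        _ = 0 := by rw [hz, Limits.zero_comp, Limits.comp_zero]
    haveI := hsimp t
    exact id_nonzero (Ss t) hid
  · have h1 : c = 1 := by
      exact mul_left_cancel₀ h0 (by rw [hidem, mul_one])
    have hBA1 : B ≫ A = 𝟙 (Ss r) := by rw [hBA, h1, one_smul]
    exact hdist t r hne ⟨⟨A, B, hAB, hBA1⟩⟩
lemma span_empty_zero {P : Type u} [IsEmpty P] {V : Type u} [AddCommGroup V] [Module k V]
    (v : P → V) (hspan : Submodule.span k (Set.range v) = ⊤) (x : V) : x = 0 := by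
  have hx : x ∈ Submodule.span k (Set.range v) := by rw [hspan]; trivial
  rw [Set.range_eq_empty v, Submodule.span_empty, Submodule.mem_bot] at hx
  exact hx

variable {κ : ι → ι → ι → Type u} [∀ t s r, DecidableEq (κ t s r)]
  {Bb : ∀ t s r, κ t s r → (Ss t ⟶ Ss s ⊗ Ss r)}
  {Bd : ∀ t s r, κ t s r → (Ss s ⊗ Ss r ⟶ Ss t)}

lemma BbBd_id (e : ∀ i, (Ss i ⟶ Ss i) ≃ₗ[k] k) (he : ∀ i, e i (𝟙 (Ss i)) = 1)
    (hdualB : ∀ t s r (p q : κ t s r),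
      e t (Bb t s r p ≫ Bd t s r q) = if p = q then 1 else 0)
    {t s r : ι} (p : κ t s r) : Bb t s r p ≫ Bd t s r p = 𝟙 (Ss t) := by
  have h := endo_scalar e he t (Bb t s r p ≫ Bd t s r p)
  rw [hdualB, if_pos rfl, one_smul] at h
  exact h

lemma kappa_left_empty (e : ∀ i, (Ss i ⟶ Ss i) ≃ₗ[k] k) (he : ∀ i, e i (𝟙 (Ss i)) = 1)
    (hdualB : ∀ t s r (p q : κ t s r),
      e t (Bb t s r p ≫ Bd t s r q) = if p = q then 1 else 0)
    (hsimp : ∀ i, Simple (Ss i))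
    (hdist : ∀ i j, i ≠ j → ¬ Nonempty (Ss i ≅ Ss j))
    (i0 : ι) (u : Ss i0 ≅ 𝟙_ C)
    {t r : ι} (hne : t ≠ r) : IsEmpty (κ t i0 r) := by
  constructor
  intro p
  refine no_retract e he hsimp hdist hne
    (Bb t i0 r p ≫ (u.hom ▷ Ss r) ≫ (λ_ (Ss r)).hom)
    ((λ_ (Ss r)).inv ≫ (u.inv ▷ Ss r) ≫ Bd t i0 r p) ?_
  rw [← BbBd_id e he hdualB p]
  simp

lemma kappa_right_empty (e : ∀ i, (Ss i ⟶ Ss i) ≃ₗ[k] k) (he : ∀ i, e i (𝟙 (Ss i)) = 1)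
    (hdualB : ∀ t s r (p q : κ t s r),
      e t (Bb t s r p ≫ Bd t s r q) = if p = q then 1 else 0)
    (hsimp : ∀ i, Simple (Ss i))
    (hdist : ∀ i j, i ≠ j → ¬ Nonempty (Ss i ≅ Ss j))
    (i0 : ι) (u : Ss i0 ≅ 𝟙_ C)
    {t s : ι} (hne : t ≠ s) : IsEmpty (κ t s i0) := by
  constructor
  intro p
  refine no_retract e he hsimp hdist hne
    (Bb t s i0 p ≫ (Ss s ◁ u.hom) ≫ (ρ_ (Ss s)).hom)
    ((ρ_ (Ss s)).inv ≫ (Ss s ◁ u.inv) ≫ Bd t s i0 p) ?_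
  rw [← BbBd_id e he hdualB p]
  simp

lemma schur_zero (e : ∀ i, (Ss i ⟶ Ss i) ≃ₗ[k] k) (he : ∀ i, e i (𝟙 (Ss i)) = 1)
    (hdualB : ∀ t s r (p q : κ t s r),
      e t (Bb t s r p ≫ Bd t s r q) = if p = q then 1 else 0)
    (hsimp : ∀ i, Simple (Ss i))
    (hdist : ∀ i j, i ≠ j → ¬ Nonempty (Ss i ≅ Ss j))
    (i0 : ι) (u : Ss i0 ≅ 𝟙_ C)
    (hBb : ∀ t s r, LinearIndependent k (Bb t s r) ∧
      Submodule.span k (Set.range (Bb t s r)) = ⊤)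
    {t r : ι} (hne : t ≠ r) (φ : Ss t ⟶ Ss r) : φ = 0 := by
  haveI := kappa_left_empty e he hdualB hsimp hdist i0 u hne
  have hψ : φ ≫ (λ_ (Ss r)).inv ≫ (u.inv ▷ Ss r) = 0 :=
    span_empty_zero (Bb t i0 r) (hBb t i0 r).2 _
  have hφ : φ = (φ ≫ (λ_ (Ss r)).inv ≫ (u.inv ▷ Ss r)) ≫ (u.hom ▷ Ss r) ≫ (λ_ (Ss r)).hom := by
    simp
  rw [hφ, hψ, Limits.zero_comp]

lemma dual_endo_subsingleton {P : Type u} [DecidableEq P]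
    (e : ∀ i, (Ss i ⟶ Ss i) ≃ₗ[k] k) (he : ∀ i, e i (𝟙 (Ss i)) = 1)
    (t : ι) (A B : P → (Ss t ⟶ Ss t))
    (h : ∀ p q, e t (A p ≫ B q) = if p = q then 1 else 0) : Subsingleton P := by
  constructor
  intro p q
  by_contra hpq
  have h1 := h p p; rw [if_pos rfl, e_comp e he] at h1
  have h2 := h q q; rw [if_pos rfl, e_comp e he] at h2
  have h0 := h p q; rw [if_neg hpq, e_comp e he] at h0
  exact (mul_ne_zero (left_ne_zero_of_mul_eq_one h1) (right_ne_zero_of_mul_eq_one h2)) h0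

lemma kappa_left_subsingleton (e : ∀ i, (Ss i ⟶ Ss i) ≃ₗ[k] k)
    (he : ∀ i, e i (𝟙 (Ss i)) = 1)
    (hdualB : ∀ t s r (p q : κ t s r),
      e t (Bb t s r p ≫ Bd t s r q) = if p = q then 1 else 0)
    (i0 : ι) (u : Ss i0 ≅ 𝟙_ C) (t : ι) : Subsingleton (κ t i0 t) := by
  refine dual_endo_subsingleton e he t
    (fun p => Bb t i0 t p ≫ (u.hom ▷ Ss t) ≫ (λ_ (Ss t)).hom)
    (fun q => (λ_ (Ss t)).inv ≫ (u.inv ▷ Ss t) ≫ Bd t i0 t q) ?_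
  intro p q
  rw [← hdualB t i0 t p q]
  congr 1
  simp

lemma kappa_right_subsingleton (e : ∀ i, (Ss i ⟶ Ss i) ≃ₗ[k] k)
    (he : ∀ i, e i (𝟙 (Ss i)) = 1)
    (hdualB : ∀ t s r (p q : κ t s r),
      e t (Bb t s r p ≫ Bd t s r q) = if p = q then 1 else 0)
    (i0 : ι) (u : Ss i0 ≅ 𝟙_ C) (t : ι) : Subsingleton (κ t t i0) := by
  refine dual_endo_subsingleton e he t
    (fun p => Bb t t i0 p ≫ (Ss t ◁ u.hom) ≫ (ρ_ (Ss t)).hom)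
    (fun q => (ρ_ (Ss t)).inv ≫ (Ss t ◁ u.inv) ≫ Bd t t i0 q) ?_
  intro p q
  rw [← hdualB t t i0 p q]
  congr 1
  simp

lemma kappa_left_nonempty (hsimp : ∀ i, Simple (Ss i))
    (hBb : ∀ t s r, LinearIndependent k (Bb t s r) ∧
      Submodule.span k (Set.range (Bb t s r)) = ⊤)
    (i0 : ι) (u : Ss i0 ≅ 𝟙_ C) (t : ι) : Nonempty (κ t i0 t) := by
  by_contra hne
  haveI : IsEmpty (κ t i0 t) := ⟨fun p => hne ⟨p⟩⟩
  have hψ : (λ_ (Ss t)).inv ≫ (u.inv ▷ Ss t) = 0 :=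
    span_empty_zero (Bb t i0 t) (hBb t i0 t).2 _
  have : 𝟙 (Ss t) = ((λ_ (Ss t)).inv ≫ (u.inv ▷ Ss t)) ≫ (u.hom ▷ Ss t) ≫ (λ_ (Ss t)).hom := by
    simp
  rw [hψ, Limits.zero_comp] at this
  haveI := hsimp t
  exact id_nonzero (Ss t) ‹𝟙 (Ss t) = 0›

lemma kappa_right_nonempty (hsimp : ∀ i, Simple (Ss i))
    (hBb : ∀ t s r, LinearIndependent k (Bb t s r) ∧
      Submodule.span k (Set.range (Bb t s r)) = ⊤)
    (i0 : ι) (u : Ss i0 ≅ 𝟙_ C) (t : ι) : Nonempty (κ t t i0) := by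
  by_contra hne
  haveI : IsEmpty (κ t t i0) := ⟨fun p => hne ⟨p⟩⟩
  have hψ : (ρ_ (Ss t)).inv ≫ (Ss t ◁ u.inv) = 0 :=
    span_empty_zero (Bb t t i0) (hBb t t i0).2 _
  have : 𝟙 (Ss t) = ((ρ_ (Ss t)).inv ≫ (Ss t ◁ u.inv)) ≫ (Ss t ◁ u.hom) ≫ (ρ_ (Ss t)).hom := by
    simp
  rw [hψ, Limits.zero_comp] at this
  haveI := hsimp t
  exact id_nonzero (Ss t) ‹𝟙 (Ss t) = 0›

lemma decomp [HasFiniteBiproducts C]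
    (hcomp : ∀ Z : C, Simple Z → ∃ i, Nonempty (Z ≅ Ss i))
    (hss : ∀ Z : C, ∃ (n : ℕ) (f : Fin n → C), (∀ m, Simple (f m)) ∧ Nonempty (Z ≅ ⨁ f))
    (U : C) : ∃ (n : ℕ) (idx : Fin n → ι)
      (pr : ∀ j, U ⟶ Ss (idx j)) (inc : ∀ j, Ss (idx j) ⟶ U),
      (∑ j, pr j ≫ inc j) = 𝟙 U := by
  obtain ⟨n, f, hf, ⟨w⟩⟩ := hss U
  choose idx hiso using fun j => hcomp (f j) (hf j)
  have v : ∀ j, f j ≅ Ss (idx j) := fun j => (hiso j).some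
  refine ⟨n, idx, fun j => w.hom ≫ biproduct.π f j ≫ (v j).hom,
    fun j => (v j).inv ≫ biproduct.ι f j ≫ w.inv, ?_⟩
  have key : ∀ j, (w.hom ≫ biproduct.π f j ≫ (v j).hom) ≫
      ((v j).inv ≫ biproduct.ι f j ≫ w.inv)
      = w.hom ≫ (biproduct.π f j ≫ biproduct.ι f j) ≫ w.inv := by
    intro j; simp
  rw [Finset.sum_congr rfl (fun j _ => key j)]
  rw [← Preadditive.comp_sum, ← Preadditive.sum_comp, biproduct.total]
  simp

lemma expand_Bb [∀ t s r, Fintype (κ t s r)]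
    (e : ∀ i, (Ss i ⟶ Ss i) ≃ₗ[k] k) (he : ∀ i, e i (𝟙 (Ss i)) = 1)
    (hdualB : ∀ t s r (p q : κ t s r),
      e t (Bb t s r p ≫ Bd t s r q) = if p = q then 1 else 0)
    (hBb : ∀ t s r, LinearIndependent k (Bb t s r) ∧
      Submodule.span k (Set.range (Bb t s r)) = ⊤)
    {t s r : ι} (c : Ss t ⟶ Ss s ⊗ Ss r) :
    c = ∑ x : κ t s r, e t (c ≫ Bd t s r x) • Bb t s r x := by
  have hc : c ∈ Submodule.span k (Set.range (Bb t s r)) := by rw [(hBb t s r).2]; trivial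
  induction hc using Submodule.span_induction with
  | mem c hmem =>
    obtain ⟨p, rfl⟩ := hmem
    symm
    rw [Finset.sum_eq_single p]
    · rw [hdualB, if_pos rfl, one_smul]
    · intro x _ hx
      rw [hdualB, if_neg (fun hh => hx hh.symm), zero_smul]
    · intro h; exact absurd (Finset.mem_univ p) h
  | zero => simp
  | add c c' _ _ ih ih' =>
    conv_lhs => rw [ih, ih']
    rw [← Finset.sum_add_distrib]
    refine Finset.sum_congr rfl fun x _ => ?_
    rw [Preadditive.add_comp, map_add, add_smul]
  | smul a c _ ih =>
    conv_lhs => rw [ih]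
    rw [Finset.smul_sum]
    refine Finset.sum_congr rfl fun x _ => ?_
    rw [Linear.smul_comp, map_smul, smul_eq_mul, mul_smul]

lemma completeness [HasFiniteBiproducts C] [Fintype ι] [∀ t s r, Fintype (κ t s r)]
    (e : ∀ i, (Ss i ⟶ Ss i) ≃ₗ[k] k) (he : ∀ i, e i (𝟙 (Ss i)) = 1)
    (hdualB : ∀ t s r (p q : κ t s r),
      e t (Bb t s r p ≫ Bd t s r q) = if p = q then 1 else 0)
    (hsimp : ∀ i, Simple (Ss i))
    (hdist : ∀ i j, i ≠ j → ¬ Nonempty (Ss i ≅ Ss j))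
    (i0 : ι) (u : Ss i0 ≅ 𝟙_ C)
    (hBb : ∀ t s r, LinearIndependent k (Bb t s r) ∧
      Submodule.span k (Set.range (Bb t s r)) = ⊤)
    (hcomp : ∀ Z : C, Simple Z → ∃ i, Nonempty (Z ≅ Ss i))
    (hss : ∀ Z : C, ∃ (n : ℕ) (f : Fin n → C), (∀ m, Simple (f m)) ∧ Nonempty (Z ≅ ⨁ f))
    (a b : ι) :
    ∑ m : ι, ∑ x : κ m a b, Bd m a b x ≫ Bb m a b x = 𝟙 (Ss a ⊗ Ss b) := by
  set E := ∑ m : ι, ∑ x : κ m a b, Bd m a b x ≫ Bb m a b x with hE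
  have absorb : ∀ (t : ι) (c : Ss t ⟶ Ss a ⊗ Ss b), c ≫ E = c := by
    intro t c
    rw [hE, Preadditive.comp_sum]
    rw [Finset.sum_eq_single t]
    · rw [Preadditive.comp_sum]
      have hterm : ∀ x : κ t a b, c ≫ Bd t a b x ≫ Bb t a b x
          = e t (c ≫ Bd t a b x) • Bb t a b x := by
        intro x
        rw [← Category.assoc, endo_scalar e he t (c ≫ Bd t a b x), Linear.smul_comp,
          Category.id_comp, map_smul, he, smul_eq_mul, mul_one]
      rw [Finset.sum_congr rfl (fun x _ => hterm x)]
      exact (expand_Bb e he hdualB hBb c).symm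
    · intro m _ hm
      rw [Preadditive.comp_sum]
      refine Finset.sum_eq_zero fun x _ => ?_
      rw [← Category.assoc,
        schur_zero e he hdualB hsimp hdist i0 u hBb (fun hh => hm hh.symm) (c ≫ Bd m a b x),
        Limits.zero_comp]
    · intro h; exact absurd (Finset.mem_univ t) h
  obtain ⟨n, idx, pr, inc, htot⟩ := decomp hcomp hss (Ss a ⊗ Ss b)
  calc E = 𝟙 _ ≫ E := (Category.id_comp E).symm
    _ = ∑ j, pr j ≫ (inc j ≫ E) := by
        rw [← htot, Preadditive.sum_comp]
        simp [Category.assoc]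
    _ = ∑ j, pr j ≫ inc j := by
        refine Finset.sum_congr rfl fun j _ => ?_
        rw [absorb (idx j) (inc j)]
    _ = 𝟙 _ := htot

lemma nondeg [HasFiniteBiproducts C]
    (e : ∀ i, (Ss i ⟶ Ss i) ≃ₗ[k] k) (he : ∀ i, e i (𝟙 (Ss i)) = 1)
    (hdualB : ∀ t s r (p q : κ t s r),
      e t (Bb t s r p ≫ Bd t s r q) = if p = q then 1 else 0)
    (hsimp : ∀ i, Simple (Ss i))
    (hdist : ∀ i j, i ≠ j → ¬ Nonempty (Ss i ≅ Ss j))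
    (i0 : ι) (u : Ss i0 ≅ 𝟙_ C)
    (hBb : ∀ t s r, LinearIndependent k (Bb t s r) ∧
      Submodule.span k (Set.range (Bb t s r)) = ⊤)
    (hcomp : ∀ Z : C, Simple Z → ∃ i, Nonempty (Z ≅ Ss i))
    (hss : ∀ Z : C, ∃ (n : ℕ) (f : Fin n → C), (∀ m, Simple (f m)) ∧ Nonempty (Z ≅ ⨁ f))
    (t : ι) (U : C) (d : U ⟶ Ss t)
    (h : ∀ c : Ss t ⟶ U, e t (c ≫ d) = 0) : d = 0 := by
  obtain ⟨n, idx, pr, inc, htot⟩ := decomp hcomp hss U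
  have hcomp0 : ∀ j, inc j ≫ d = 0 := by
    intro j
    by_cases hj : idx j = t
    · have hc := h (eqToHom (congrArg Ss hj).symm ≫ inc j)
      rw [Category.assoc] at hc
      have := endo_scalar e he t (eqToHom (congrArg Ss hj).symm ≫ (inc j ≫ d))
      rw [hc, zero_smul] at this
      calc inc j ≫ d = eqToHom (congrArg Ss hj) ≫
            (eqToHom (congrArg Ss hj).symm ≫ (inc j ≫ d)) := by
            rw [← Category.assoc, eqToHom_trans, eqToHom_refl, Category.id_comp]
        _ = 0 := by rw [this, Limits.comp_zero]
    · exact schur_zero e he hdualB hsimp hdist i0 u hBb hj (inc j ≫ d)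
  calc d = 𝟙 U ≫ d := (Category.id_comp d).symm
    _ = ∑ j, pr j ≫ (inc j ≫ d) := by rw [← htot, Preadditive.sum_comp]; simp [Category.assoc]
    _ = 0 := by
        refine Finset.sum_eq_zero fun j _ => ?_
        rw [hcomp0 j, Limits.comp_zero]
end Aux

section Coh
variable {C : Type u} [Category.{u} C] [MonoidalCategory C]

/-- The middle morphism used in the associativity proof. -/
def midMor {S Q R W X Y Z : C} (f : R ⊗ W ⟶ X ⊗ R) (g : Q ⊗ X ⟶ Y ⊗ Q)
    (h : S ⊗ Y ⟶ Z ⊗ S) : ((S ⊗ Q) ⊗ R) ⊗ W ⟶ Z ⊗ ((S ⊗ Q) ⊗ R) :=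
  (α_ (S ⊗ Q) R W).hom ≫ ((S ⊗ Q) ◁ f) ≫ (α_ (S ⊗ Q) X R).inv ≫
    ((α_ S Q X).hom ▷ R) ≫ ((S ◁ g) ▷ R) ≫ ((α_ S Y Q).inv ▷ R) ≫
    ((h ▷ Q) ▷ R) ≫ ((α_ Z S Q).hom ▷ R) ≫ (α_ Z (S ⊗ Q) R).hom

lemma assoc_coh1 {S Q R W X Y Z M T : C} (bb1 : T ⟶ S ⊗ M) (bb2 : M ⟶ Q ⊗ R)
    (fr : R ⊗ W ⟶ X ⊗ R) (gq : Q ⊗ X ⟶ Y ⊗ Q) (hs : S ⊗ Y ⟶ Z ⊗ S)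
    (bd2 : Q ⊗ R ⟶ M) (bd1 : S ⊗ M ⟶ T) :
    (bb1 ▷ W) ≫ (α_ S M W).hom ≫
      (S ◁ ((bb2 ▷ W) ≫ (α_ Q R W).hom ≫ (Q ◁ fr) ≫ (α_ Q X R).inv ≫ (gq ▷ R) ≫
        (α_ Y Q R).hom ≫ (Y ◁ bd2))) ≫
      (α_ S Y M).inv ≫ (hs ▷ M) ≫ (α_ Z S M).hom ≫ (Z ◁ bd1)
    = ((bb1 ≫ (S ◁ bb2) ≫ (α_ S Q R).inv) ▷ W) ≫ midMor fr gq hs ≫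
      (Z ◁ ((α_ S Q R).hom ≫ (S ◁ bd2) ≫ bd1)) := by
  rw [midMor]
  calc _ = (bb1 ▷ W) ≫ (α_ S M W).hom ≫
      (S ◁ ((bb2 ▷ W) ≫ (α_ Q R W).hom ≫ (Q ◁ fr) ≫ (α_ Q X R).inv ≫ (gq ▷ R) ≫
        (α_ Y Q R).hom)) ≫
      (α_ S Y (Q ⊗ R)).inv ≫ (hs ▷ (Q ⊗ R)) ≫ ((Z ⊗ S) ◁ bd2) ≫ (α_ Z S M).hom ≫
      (Z ◁ bd1) := by
        simp only [MonoidalCategory.whiskerLeft_comp, Category.assoc]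
        rw [associator_inv_naturality_right_assoc, whisker_exchange_assoc]
    _ = _ := by monoidal

lemma assoc_coh2 {S Q R W X Y Z M T : C} (bb1' : T ⟶ M ⊗ R) (bb2' : M ⟶ S ⊗ Q)
    (fr : R ⊗ W ⟶ X ⊗ R) (gq : Q ⊗ X ⟶ Y ⊗ Q) (hs : S ⊗ Y ⟶ Z ⊗ S)
    (bd2' : S ⊗ Q ⟶ M) (bd1' : M ⊗ R ⟶ T) :
    (bb1' ▷ W) ≫ (α_ M R W).hom ≫ (M ◁ fr) ≫ (α_ M X R).inv ≫
      (((bb2' ▷ X) ≫ (α_ S Q X).hom ≫ (S ◁ gq) ≫ (α_ S Y Q).inv ≫ (hs ▷ Q) ≫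
        (α_ Z S Q).hom ≫ (Z ◁ bd2')) ▷ R) ≫
      (α_ Z M R).hom ≫ (Z ◁ bd1')
    = ((bb1' ≫ (bb2' ▷ R)) ▷ W) ≫ midMor fr gq hs ≫ (Z ◁ ((bd2' ▷ R) ≫ bd1')) := by
  rw [midMor]
  simp only [MonoidalCategory.comp_whiskerRight, Category.assoc]
  rw [← associator_inv_naturality_left_assoc, whisker_exchange_assoc]
  monoidal

lemma runit_coh {R X Y T I0 : C} (bb : T ⟶ I0 ⊗ R) (bd : I0 ⊗ R ⟶ T)
    (fr : R ⊗ X ⟶ Y ⊗ R) (uh : I0 ⟶ 𝟙_ C) (ui : 𝟙_ C ⟶ I0) :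
    (bb ▷ X) ≫ (α_ I0 R X).hom ≫ (I0 ◁ fr) ≫ (α_ I0 Y R).inv ≫
      (((uh ▷ Y) ≫ (λ_ Y).hom ≫ (ρ_ Y).inv ≫ (Y ◁ ui)) ▷ R) ≫
      (α_ Y I0 R).hom ≫ (Y ◁ bd)
    = ((bb ≫ (uh ▷ R) ≫ (λ_ R).hom) ▷ X) ≫ fr ≫
      (Y ◁ ((λ_ R).inv ≫ (ui ▷ R) ≫ bd)) := by
  simp only [MonoidalCategory.comp_whiskerRight, Category.assoc]
  rw [← associator_inv_naturality_left_assoc, whisker_exchange_assoc]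
  monoidal

lemma lunit_coh {S X Y T I0 : C} (uh : I0 ⟶ 𝟙_ C) (ui : 𝟙_ C ⟶ I0)
    (bb' : T ⟶ S ⊗ I0) (bd' : S ⊗ I0 ⟶ T) (fs : S ⊗ X ⟶ Y ⊗ S) :
    (bb' ▷ X) ≫ (α_ S I0 X).hom ≫
      (S ◁ ((uh ▷ X) ≫ (λ_ X).hom ≫ (ρ_ X).inv ≫ (X ◁ ui))) ≫
      (α_ S X I0).inv ≫ (fs ▷ I0) ≫ (α_ Y S I0).hom ≫ (Y ◁ bd')
    = ((bb' ≫ (S ◁ uh) ≫ (ρ_ S).hom) ▷ X) ≫ fs ≫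
      (Y ◁ ((ρ_ S).inv ≫ (S ◁ ui) ≫ bd')) := by
  simp only [MonoidalCategory.whiskerLeft_comp, Category.assoc]
  rw [associator_inv_naturality_right_assoc, whisker_exchange_assoc]
  monoidal
end Coh

section Aux2
variable {k : Type u} [Field k] {C : Type u} [Category.{u} C] [Preadditive C]
  [CategoryTheory.Linear k C] [MonoidalCategory C]
variable {ι : Type u} {Ss : ι → C}

/-- The composition pairing as a bilinear map. -/
def pairHom (e : ∀ i, (Ss i ⟶ Ss i) ≃ₗ[k] k) (t : ι) (U : C) :
    (Ss t ⟶ U) →ₗ[k] (U ⟶ Ss t) →ₗ[k] k :=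
  LinearMap.mk₂ k (fun c d => e t (c ≫ d))
    (fun c c' d => by rw [Preadditive.add_comp, map_add])
    (fun a c d => by rw [Linear.smul_comp, map_smul])
    (fun c d d' => by rw [Preadditive.comp_add, map_add])
    (fun a c d => by rw [Linear.comp_smul, map_smul])

/-- Glueing a middle morphism with boundary morphisms, as a bilinear map. -/
def glueHom [MonoidalPreadditive C] [MonoidalLinear k C] (t : ι) {U W Z : C}
    (Mm : U ⊗ W ⟶ Z ⊗ U) :
    (Ss t ⟶ U) →ₗ[k] (U ⟶ Ss t) →ₗ[k] (Ss t ⊗ W ⟶ Z ⊗ Ss t) :=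
  LinearMap.mk₂ k (fun c d => (c ▷ W) ≫ Mm ≫ (Z ◁ d))
    (fun c c' d => by
      rw [MonoidalPreadditive.add_whiskerRight, Preadditive.add_comp])
    (fun a c d => by
      rw [MonoidalLinear.smul_whiskerRight, Linear.smul_comp])
    (fun c d d' => by
      rw [MonoidalPreadditive.whiskerLeft_add, Preadditive.comp_add, Preadditive.comp_add])
    (fun a c d => by
      rw [MonoidalLinear.whiskerLeft_smul, Linear.comp_smul, Linear.comp_smul])

lemma scalar_term [MonoidalPreadditive C] [MonoidalLinear k C]
    (e : ∀ i, (Ss i ⟶ Ss i) ≃ₗ[k] k) (he : ∀ i, e i (𝟙 (Ss i)) = 1)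
    (t : ι) {X Y : C} (A B : Ss t ⟶ Ss t) (hAB : e t (A ≫ B) = 1)
    (φ : Ss t ⊗ X ⟶ Y ⊗ Ss t) : (A ▷ X) ≫ φ ≫ (Y ◁ B) = φ := by
  rw [e_comp e he] at hAB
  conv_lhs => rw [endo_scalar e he t A, endo_scalar e he t B]
  rw [MonoidalLinear.smul_whiskerRight, MonoidalLinear.whiskerLeft_smul,
    MonoidalCategory.id_whiskerRight, MonoidalCategory.whiskerLeft_id,
    Linear.smul_comp, Linear.comp_smul, Linear.comp_smul, Category.id_comp,
    Category.comp_id, smul_smul, hAB, one_smul]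

lemma reorder6L {M : Type u} [AddCommMonoid M] {ι : Type u} [Fintype ι]
    {P : ι → ι → Type u} [∀ a b, Fintype (P a b)]
    {Q : ι → ι → ι → Type u} [∀ a b c, Fintype (Q a b c)]
    (F : ∀ s m, P s m → ∀ q r, (Q m q r) → M) :
    ∑ s, ∑ m, ∑ p : P s m, ∑ q, ∑ r, ∑ x : Q m q r, F s m p q r x
      = ∑ s, ∑ q, ∑ r, ∑ m, ∑ p : P s m, ∑ x : Q m q r, F s m p q r x := by
  refine Finset.sum_congr rfl fun s _ => ?_
  calc ∑ m, ∑ p : P s m, ∑ q, ∑ r, ∑ x : Q m q r, F s m p q r x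
      = ∑ m, ∑ q, ∑ p : P s m, ∑ r, ∑ x : Q m q r, F s m p q r x :=
        Finset.sum_congr rfl fun m _ => Finset.sum_comm
    _ = ∑ m, ∑ q, ∑ r, ∑ p : P s m, ∑ x : Q m q r, F s m p q r x :=
        Finset.sum_congr rfl fun m _ => Finset.sum_congr rfl fun q _ => Finset.sum_comm
    _ = ∑ q, ∑ m, ∑ r, ∑ p : P s m, ∑ x : Q m q r, F s m p q r x := Finset.sum_comm
    _ = ∑ q, ∑ r, ∑ m, ∑ p : P s m, ∑ x : Q m q r, F s m p q r x :=
        Finset.sum_congr rfl fun q _ => Finset.sum_comm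

lemma reorder6R {M : Type u} [AddCommMonoid M] {ι : Type u} [Fintype ι]
    {P : ι → ι → Type u} [∀ a b, Fintype (P a b)]
    {Q : ι → ι → ι → Type u} [∀ a b c, Fintype (Q a b c)]
    (F : ∀ m r, P m r → ∀ s q, (Q m s q) → M) :
    ∑ m, ∑ r, ∑ p : P m r, ∑ s, ∑ q, ∑ x : Q m s q, F m r p s q x
      = ∑ s, ∑ q, ∑ r, ∑ m, ∑ p : P m r, ∑ x : Q m s q, F m r p s q x := by
  calc ∑ m, ∑ r, ∑ p : P m r, ∑ s, ∑ q, ∑ x : Q m s q, F m r p s q x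
      = ∑ m, ∑ r, ∑ s, ∑ p : P m r, ∑ q, ∑ x : Q m s q, F m r p s q x :=
        Finset.sum_congr rfl fun m _ => Finset.sum_congr rfl fun r _ => Finset.sum_comm
    _ = ∑ m, ∑ r, ∑ s, ∑ q, ∑ p : P m r, ∑ x : Q m s q, F m r p s q x :=
        Finset.sum_congr rfl fun m _ => Finset.sum_congr rfl fun r _ =>
          Finset.sum_congr rfl fun s _ => Finset.sum_comm
    _ = ∑ m, ∑ s, ∑ r, ∑ q, ∑ p : P m r, ∑ x : Q m s q, F m r p s q x :=
        Finset.sum_congr rfl fun m _ => Finset.sum_comm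
    _ = ∑ s, ∑ m, ∑ r, ∑ q, ∑ p : P m r, ∑ x : Q m s q, F m r p s q x := Finset.sum_comm
    _ = ∑ s, ∑ m, ∑ q, ∑ r, ∑ p : P m r, ∑ x : Q m s q, F m r p s q x :=
        Finset.sum_congr rfl fun s _ => Finset.sum_congr rfl fun m _ => Finset.sum_comm
    _ = ∑ s, ∑ q, ∑ m, ∑ r, ∑ p : P m r, ∑ x : Q m s q, F m r p s q x :=
        Finset.sum_congr rfl fun s _ => Finset.sum_comm
    _ = ∑ s, ∑ q, ∑ r, ∑ m, ∑ p : P m r, ∑ x : Q m s q, F m r p s q x :=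
        Finset.sum_congr rfl fun s _ => Finset.sum_congr rfl fun q _ => Finset.sum_comm
end Aux2

section AssocKey
variable {k : Type u} [Field k] {C : Type u} [Category.{u} C] [Preadditive C]
  [CategoryTheory.Linear k C] [MonoidalCategory C]
  [MonoidalPreadditive C] [MonoidalLinear k C] [HasFiniteBiproducts C]
variable {ι : Type u} [Fintype ι] [DecidableEq ι] {Ss : ι → C}
variable {κ : ι → ι → ι → Type u} [∀ t s r, Fintype (κ t s r)]
  [∀ t s r, DecidableEq (κ t s r)]
  {Bb : ∀ t s r, κ t s r → (Ss t ⟶ Ss s ⊗ Ss r)}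
  {Bd : ∀ t s r, κ t s r → (Ss s ⊗ Ss r ⟶ Ss t)}

lemma assoc_key
    (e : ∀ i, (Ss i ⟶ Ss i) ≃ₗ[k] k) (he : ∀ i, e i (𝟙 (Ss i)) = 1)
    (hdualB : ∀ t s r (p q : κ t s r),
      e t (Bb t s r p ≫ Bd t s r q) = if p = q then 1 else 0)
    (hsimp : ∀ i, Simple (Ss i))
    (hdist : ∀ i j, i ≠ j → ¬ Nonempty (Ss i ≅ Ss j))
    (i0 : ι) (u : Ss i0 ≅ 𝟙_ C)
    (hBb : ∀ t s r, LinearIndependent k (Bb t s r) ∧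
      Submodule.span k (Set.range (Bb t s r)) = ⊤)
    (hcomp : ∀ Z : C, Simple Z → ∃ i, Nonempty (Z ≅ Ss i))
    (hss : ∀ Z : C, ∃ (n : ℕ) (fn : Fin n → C), (∀ m, Simple (fn m)) ∧ Nonempty (Z ≅ ⨁ fn))
    (t s q r : ι) {W X Y Z : C}
    (f : Ss r ⊗ W ⟶ X ⊗ Ss r) (g : Ss q ⊗ X ⟶ Y ⊗ Ss q) (h : Ss s ⊗ Y ⟶ Z ⊗ Ss s) :
    (∑ m : ι, ∑ p : κ t s m, ∑ x : κ m q r,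
      (Bb t s m p ▷ W) ≫ (α_ (Ss s) (Ss m) W).hom ≫
        (Ss s ◁ ((Bb m q r x ▷ W) ≫ (α_ (Ss q) (Ss r) W).hom ≫ (Ss q ◁ f) ≫
          (α_ (Ss q) X (Ss r)).inv ≫ (g ▷ Ss r) ≫ (α_ Y (Ss q) (Ss r)).hom ≫
          (Y ◁ Bd m q r x))) ≫
        (α_ (Ss s) Y (Ss m)).inv ≫ (h ▷ Ss m) ≫ (α_ Z (Ss s) (Ss m)).hom ≫
        (Z ◁ Bd t s m p))
    = ∑ m : ι, ∑ p : κ t m r, ∑ x : κ m s q,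
      (Bb t m r p ▷ W) ≫ (α_ (Ss m) (Ss r) W).hom ≫ (Ss m ◁ f) ≫
        (α_ (Ss m) X (Ss r)).inv ≫
        (((Bb m s q x ▷ X) ≫ (α_ (Ss s) (Ss q) X).hom ≫ (Ss s ◁ g) ≫
          (α_ (Ss s) Y (Ss q)).inv ≫ (h ▷ Ss q) ≫ (α_ Z (Ss s) (Ss q)).hom ≫
          (Z ◁ Bd m s q x)) ▷ Ss r) ≫
        (α_ Z (Ss m) (Ss r)).hom ≫ (Z ◁ Bd t m r p) := by
  classical
  have SCH : ∀ {a b : ι}, a ≠ b → ∀ φ : Ss a ⟶ Ss b, φ = 0 :=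
    fun hne φ => schur_zero e he hdualB hsimp hdist i0 u hBb hne φ
  set c1 : ((m : ι) × (κ t s m × κ m q r)) → (Ss t ⟶ (Ss s ⊗ Ss q) ⊗ Ss r) := fun i =>
    Bb t s i.1 i.2.1 ≫ (Ss s ◁ Bb i.1 q r i.2.2) ≫ (α_ (Ss s) (Ss q) (Ss r)).inv with hc1
  set d1 : ((m : ι) × (κ t s m × κ m q r)) → ((Ss s ⊗ Ss q) ⊗ Ss r ⟶ Ss t) := fun i =>
    (α_ (Ss s) (Ss q) (Ss r)).hom ≫ (Ss s ◁ Bd i.1 q r i.2.2) ≫ Bd t s i.1 i.2.1 with hd1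
  set c2 : ((m : ι) × (κ t m r × κ m s q)) → (Ss t ⟶ (Ss s ⊗ Ss q) ⊗ Ss r) := fun j =>
    Bb t j.1 r j.2.1 ≫ (Bb j.1 s q j.2.2 ▷ Ss r) with hc2
  set d2 : ((m : ι) × (κ t m r × κ m s q)) → ((Ss s ⊗ Ss q) ⊗ Ss r ⟶ Ss t) := fun j =>
    (Bd j.1 s q j.2.2 ▷ Ss r) ≫ Bd t j.1 r j.2.1 with hd2
  have hnd : ∀ d : (Ss s ⊗ Ss q) ⊗ Ss r ⟶ Ss t,
      (∀ c : Ss t ⟶ (Ss s ⊗ Ss q) ⊗ Ss r,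
        pairHom (k := k) e t ((Ss s ⊗ Ss q) ⊗ Ss r) c d = 0) → d = 0 := by
    intro d hd
    refine nondeg e he hdualB hsimp hdist i0 u hBb hcomp hss t _ d ?_
    intro c
    exact hd c
  have hcd1 : ∀ i i', pairHom (k := k) e t ((Ss s ⊗ Ss q) ⊗ Ss r) (c1 i) (d1 i')
      = if i = i' then 1 else 0 := by
    rintro ⟨m, p, x⟩ ⟨m', p', x'⟩
    have hc : c1 ⟨m, (p, x)⟩ ≫ d1 ⟨m', (p', x')⟩
        = Bb t s m p ≫ (Ss s ◁ (Bb m q r x ≫ Bd m' q r x')) ≫ Bd t s m' p' := by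
      simp only [hc1, hd1, MonoidalCategory.whiskerLeft_comp, Category.assoc,
        Iso.inv_hom_id_assoc]
    have hPp : pairHom (k := k) e t ((Ss s ⊗ Ss q) ⊗ Ss r) (c1 ⟨m, (p, x)⟩)
        (d1 ⟨m', (p', x')⟩) = e t (c1 ⟨m, (p, x)⟩ ≫ d1 ⟨m', (p', x')⟩) := rfl
    by_cases hm : m = m'
    · subst hm
      have hmid : Bb m q r x ≫ Bd m q r x' = (if x = x' then (1:k) else 0) • 𝟙 (Ss m) := by
        rw [endo_scalar e he m (Bb m q r x ≫ Bd m q r x'), hdualB]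
      rw [hPp, hc, hmid]
      simp only [MonoidalLinear.whiskerLeft_smul, MonoidalCategory.whiskerLeft_id,
        Linear.smul_comp, Linear.comp_smul, Category.id_comp, map_smul, smul_eq_mul, hdualB]
      by_cases hx : x = x' <;> by_cases hp : p = p' <;>
        simp [hx, hp]
    · have h0 : Bb m q r x ≫ Bd m' q r x' = 0 := SCH hm _
      rw [hPp, hc, h0, MonoidalPreadditive.whiskerLeft_zero, Limits.zero_comp,
        Limits.comp_zero, map_zero, if_neg (by intro hh; injection hh with h1 h2; exact hm h1)]
  have hcd2 : ∀ j j', pairHom (k := k) e t ((Ss s ⊗ Ss q) ⊗ Ss r) (c2 j) (d2 j')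
      = if j = j' then 1 else 0 := by
    rintro ⟨m, p, x⟩ ⟨m', p', x'⟩
    have hc : c2 ⟨m, (p, x)⟩ ≫ d2 ⟨m', (p', x')⟩
        = Bb t m r p ≫ ((Bb m s q x ≫ Bd m' s q x') ▷ Ss r) ≫ Bd t m' r p' := by
      simp only [hc2, hd2, MonoidalCategory.comp_whiskerRight, Category.assoc]
    have hPp : pairHom (k := k) e t ((Ss s ⊗ Ss q) ⊗ Ss r) (c2 ⟨m, (p, x)⟩)
        (d2 ⟨m', (p', x')⟩) = e t (c2 ⟨m, (p, x)⟩ ≫ d2 ⟨m', (p', x')⟩) := rfl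
    by_cases hm : m = m'
    · subst hm
      have hmid : Bb m s q x ≫ Bd m s q x' = (if x = x' then (1:k) else 0) • 𝟙 (Ss m) := by
        rw [endo_scalar e he m (Bb m s q x ≫ Bd m s q x'), hdualB]
      rw [hPp, hc, hmid]
      simp only [MonoidalLinear.smul_whiskerRight, MonoidalCategory.id_whiskerRight,
        Linear.smul_comp, Linear.comp_smul, Category.id_comp, map_smul, smul_eq_mul, hdualB]
      by_cases hx : x = x' <;> by_cases hp : p = p' <;>
        simp [hx, hp]
    · have h0 : Bb m s q x ≫ Bd m' s q x' = 0 := SCH hm _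
      rw [hPp, hc, h0, MonoidalPreadditive.zero_whiskerRight, Limits.zero_comp,
        Limits.comp_zero, map_zero, if_neg (by intro hh; injection hh with h1 h2; exact hm h1)]
  have hspan1 : Submodule.span k (Set.range c1) = ⊤ := by
    rw [Submodule.eq_top_iff']
    intro φ
    have h1 : φ ≫ (α_ (Ss s) (Ss q) (Ss r)).hom
        = ∑ m : ι, ∑ x : κ m q r,
          ((φ ≫ (α_ (Ss s) (Ss q) (Ss r)).hom) ≫ (Ss s ◁ Bd m q r x)) ≫
            (Ss s ◁ Bb m q r x) := by
      conv_lhs => rw [← Category.comp_id (φ ≫ (α_ (Ss s) (Ss q) (Ss r)).hom),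
        ← MonoidalCategory.whiskerLeft_id (Ss s) (Ss q ⊗ Ss r),
        ← completeness e he hdualB hsimp hdist i0 u hBb hcomp hss q r]
      simp only [whiskerLeft_sum, Preadditive.comp_sum,
        MonoidalCategory.whiskerLeft_comp, ← Category.assoc]
    have hexp : φ = ∑ m : ι, ∑ x : κ m q r, ∑ p : κ t s m,
        e t (((φ ≫ (α_ (Ss s) (Ss q) (Ss r)).hom) ≫ (Ss s ◁ Bd m q r x)) ≫ Bd t s m p) •
          c1 ⟨m, (p, x)⟩ := by
      calc φ = (φ ≫ (α_ (Ss s) (Ss q) (Ss r)).hom) ≫ (α_ (Ss s) (Ss q) (Ss r)).inv := by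
            simp
        _ = ∑ m : ι, ∑ x : κ m q r,
            (((φ ≫ (α_ (Ss s) (Ss q) (Ss r)).hom) ≫ (Ss s ◁ Bd m q r x)) ≫
              (Ss s ◁ Bb m q r x)) ≫ (α_ (Ss s) (Ss q) (Ss r)).inv := by
            conv_lhs => rw [h1]
            simp only [Preadditive.sum_comp]
        _ = _ := by
            refine Finset.sum_congr rfl fun m _ => Finset.sum_congr rfl fun x _ => ?_
            conv_lhs => rw [expand_Bb e he hdualB hBb
              ((φ ≫ (α_ (Ss s) (Ss q) (Ss r)).hom) ≫ (Ss s ◁ Bd m q r x))]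
            simp only [Preadditive.sum_comp, Linear.smul_comp, hc1, Category.assoc]
    rw [hexp]
    exact Submodule.sum_mem _ fun m _ => Submodule.sum_mem _ fun x _ =>
      Submodule.sum_mem _ fun p _ => Submodule.smul_mem _ _
        (Submodule.subset_span ⟨⟨m, (p, x)⟩, rfl⟩)
  have hspan2 : Submodule.span k (Set.range c2) = ⊤ := by
    rw [Submodule.eq_top_iff']
    intro φ
    have h1 : φ = ∑ m : ι, ∑ x : κ m s q,
          (φ ≫ (Bd m s q x ▷ Ss r)) ≫ (Bb m s q x ▷ Ss r) := by
      conv_lhs => rw [← Category.comp_id φ,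
        ← MonoidalCategory.id_whiskerRight (Ss s ⊗ Ss q) (Ss r),
        ← completeness e he hdualB hsimp hdist i0 u hBb hcomp hss s q]
      simp only [sum_whiskerRight, Preadditive.comp_sum,
        MonoidalCategory.comp_whiskerRight, ← Category.assoc]
    have hexp : φ = ∑ m : ι, ∑ x : κ m s q, ∑ p : κ t m r,
        e t ((φ ≫ (Bd m s q x ▷ Ss r)) ≫ Bd t m r p) • c2 ⟨m, (p, x)⟩ := by
      calc φ = ∑ m : ι, ∑ x : κ m s q,
            (φ ≫ (Bd m s q x ▷ Ss r)) ≫ (Bb m s q x ▷ Ss r) := h1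
        _ = _ := by
            refine Finset.sum_congr rfl fun m _ => Finset.sum_congr rfl fun x _ => ?_
            conv_lhs => rw [expand_Bb e he hdualB hBb (φ ≫ (Bd m s q x ▷ Ss r))]
            simp only [Preadditive.sum_comp, Linear.smul_comp, hc2]
    rw [hexp]
    exact Submodule.sum_mem _ fun m _ => Submodule.sum_mem _ fun x _ =>
      Submodule.sum_mem _ fun p _ => Submodule.smul_mem _ _
        (Submodule.subset_span ⟨⟨m, (p, x)⟩, rfl⟩)
  have key := dualSystem_exchange (pairHom (k := k) e t ((Ss s ⊗ Ss q) ⊗ Ss r))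
    (glueHom (k := k) t (midMor f g h)) hnd c1 d1 c2 d2 hspan1 hspan2 hcd1 hcd2
  have convL : ∑ i : (m : ι) × (κ t s m × κ m q r),
      glueHom (k := k) t (midMor f g h) (c1 i) (d1 i)
      = ∑ m : ι, ∑ p : κ t s m, ∑ x : κ m q r,
        (Bb t s m p ▷ W) ≫ (α_ (Ss s) (Ss m) W).hom ≫
          (Ss s ◁ ((Bb m q r x ▷ W) ≫ (α_ (Ss q) (Ss r) W).hom ≫ (Ss q ◁ f) ≫
            (α_ (Ss q) X (Ss r)).inv ≫ (g ▷ Ss r) ≫ (α_ Y (Ss q) (Ss r)).hom ≫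
            (Y ◁ Bd m q r x))) ≫
          (α_ (Ss s) Y (Ss m)).inv ≫ (h ▷ Ss m) ≫ (α_ Z (Ss s) (Ss m)).hom ≫
          (Z ◁ Bd t s m p) := by
    rw [← Finset.univ_sigma_univ, Finset.sum_sigma]
    refine Finset.sum_congr rfl fun m _ => ?_
    rw [Fintype.sum_prod_type]
    refine Finset.sum_congr rfl fun p _ => Finset.sum_congr rfl fun x _ => ?_
    have happ : glueHom (k := k) t (midMor f g h) (c1 ⟨m, (p, x)⟩) (d1 ⟨m, (p, x)⟩)
        = (c1 ⟨m, (p, x)⟩ ▷ W) ≫ midMor f g h ≫ (Z ◁ d1 ⟨m, (p, x)⟩) := rfl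
    rw [happ, hc1, hd1]
    exact (assoc_coh1 (Bb t s m p) (Bb m q r x) f g h (Bd m q r x) (Bd t s m p)).symm
  have convR : ∑ j : (m : ι) × (κ t m r × κ m s q),
      glueHom (k := k) t (midMor f g h) (c2 j) (d2 j)
      = ∑ m : ι, ∑ p : κ t m r, ∑ x : κ m s q,
        (Bb t m r p ▷ W) ≫ (α_ (Ss m) (Ss r) W).hom ≫ (Ss m ◁ f) ≫
          (α_ (Ss m) X (Ss r)).inv ≫
          (((Bb m s q x ▷ X) ≫ (α_ (Ss s) (Ss q) X).hom ≫ (Ss s ◁ g) ≫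
            (α_ (Ss s) Y (Ss q)).inv ≫ (h ▷ Ss q) ≫ (α_ Z (Ss s) (Ss q)).hom ≫
            (Z ◁ Bd m s q x)) ▷ Ss r) ≫
          (α_ Z (Ss m) (Ss r)).hom ≫ (Z ◁ Bd t m r p) := by
    rw [← Finset.univ_sigma_univ, Finset.sum_sigma]
    refine Finset.sum_congr rfl fun m _ => ?_
    rw [Fintype.sum_prod_type]
    refine Finset.sum_congr rfl fun p _ => Finset.sum_congr rfl fun x _ => ?_
    have happ : glueHom (k := k) t (midMor f g h) (c2 ⟨m, (p, x)⟩) (d2 ⟨m, (p, x)⟩)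
        = (c2 ⟨m, (p, x)⟩ ▷ W) ≫ midMor f g h ≫ (Z ◁ d2 ⟨m, (p, x)⟩) := rfl
    rw [happ, hc2, hd2]
    exact (assoc_coh2 (Bb t m r p) (Bb m s q x) f g h (Bd m s q x) (Bd t m r p)).symm
  rw [← convL, ← convR]
  exact key
end AssocKey

/-- The tube category `T(C)` of a modular tensor category `C` — with
objects those of `C`, `Hom(X,Y) = ⊕_R Hom_C(R⊗X, Y⊗R)`, composition given by glueing
along dual bases `b ∈ Hom(T, S⊗R)`, `b*`, and identity with `R`-component `δ_{R,1} id` —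
is a `k`-linear category: composition is bilinear, associative and unital. -/
theorem stmt14
    [IsAlgClosed k] [BraidedCategory C] [MonoidalPreadditive C] [MonoidalLinear k C]
    [HasFiniteBiproducts C] [Simple (𝟙_ C)]
    (S : Spherical k C)
    (ι : Type u) [Fintype ι] [DecidableEq ι] (Ss : ι → C)
    (hsimp : ∀ i, Simple (Ss i))
    (hcomp : ∀ Z : C, Simple Z → ∃ i, Nonempty (Z ≅ Ss i))
    (hdist : ∀ i j, i ≠ j → ¬ Nonempty (Ss i ≅ Ss j))
    (hss : ∀ Z : C, ∃ (n : ℕ) (f : Fin n → C), (∀ m, Simple (f m)) ∧ Nonempty (Z ≅ ⨁ f))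
    (hfd : ∀ X Y : C, FiniteDimensional k (X ⟶ Y))
    (hdim : ∀ i, S.dim (Ss i) ≠ 0)
    (hmod : IsUnit (Matrix.det
      (Matrix.of fun i j : ι => S.tr ((β_ (Ss i) (Ss j)).hom ≫ (β_ (Ss j) (Ss i)).hom))))
    (κ : ι → ι → ι → Type u) [∀ t s r, Fintype (κ t s r)] [∀ t s r, DecidableEq (κ t s r)]
    (Bb : ∀ t s r, κ t s r → (Ss t ⟶ Ss s ⊗ Ss r))
    (Bd : ∀ t s r, κ t s r → (Ss s ⊗ Ss r ⟶ Ss t))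
    (hBb : ∀ t s r, LinearIndependent k (Bb t s r) ∧
      Submodule.span k (Set.range (Bb t s r)) = ⊤)
    (e : ∀ i, (Ss i ⟶ Ss i) ≃ₗ[k] k) (he : ∀ i, e i (𝟙 (Ss i)) = 1)
    (hdualB : ∀ t s r (p q : κ t s r),
      e t (Bb t s r p ≫ Bd t s r q) = if p = q then 1 else 0)
    (i0 : ι) (u : Ss i0 ≅ 𝟙_ C)
    :
    (∀ (X Y Z : C) (f f' : ∀ r, Ss r ⊗ X ⟶ Y ⊗ Ss r) (g : ∀ s, Ss s ⊗ Y ⟶ Z ⊗ Ss s),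
      tubeComp Ss κ Bb Bd (f + f') g
        = tubeComp Ss κ Bb Bd f g + tubeComp Ss κ Bb Bd f' g) ∧
    (∀ (X Y Z : C) (f : ∀ r, Ss r ⊗ X ⟶ Y ⊗ Ss r) (g g' : ∀ s, Ss s ⊗ Y ⟶ Z ⊗ Ss s),
      tubeComp Ss κ Bb Bd f (g + g')
        = tubeComp Ss κ Bb Bd f g + tubeComp Ss κ Bb Bd f g') ∧
    (∀ (c : k) (X Y Z : C) (f : ∀ r, Ss r ⊗ X ⟶ Y ⊗ Ss r)
        (g : ∀ s, Ss s ⊗ Y ⟶ Z ⊗ Ss s),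
      tubeComp Ss κ Bb Bd (c • f) g = c • tubeComp Ss κ Bb Bd f g ∧
      tubeComp Ss κ Bb Bd f (c • g) = c • tubeComp Ss κ Bb Bd f g) ∧
    (∀ (W X Y Z : C) (f : ∀ r, Ss r ⊗ W ⟶ X ⊗ Ss r) (g : ∀ s, Ss s ⊗ X ⟶ Y ⊗ Ss s)
        (h : ∀ t, Ss t ⊗ Y ⟶ Z ⊗ Ss t),
      tubeComp Ss κ Bb Bd (tubeComp Ss κ Bb Bd f g) h
        = tubeComp Ss κ Bb Bd f (tubeComp Ss κ Bb Bd g h)) ∧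
    (∀ (X Y : C) (f : ∀ r, Ss r ⊗ X ⟶ Y ⊗ Ss r),
      tubeComp Ss κ Bb Bd (tubeId Ss i0 u X) f = f ∧
      tubeComp Ss κ Bb Bd f (tubeId Ss i0 u Y) = f) := by
  classical
  refine ⟨?_, ?_, ?_, ?_, ?_⟩
  · intro X Y Z f f' g
    funext t
    simp only [tubeComp, Pi.add_apply, MonoidalPreadditive.whiskerLeft_add,
      Preadditive.comp_add, Preadditive.add_comp, Finset.sum_add_distrib]
  · intro X Y Z f g g'
    funext t
    simp only [tubeComp, Pi.add_apply, MonoidalPreadditive.add_whiskerRight,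
      Preadditive.comp_add, Preadditive.add_comp, Finset.sum_add_distrib]
  · intro c X Y Z f g
    constructor
    · funext t
      simp only [tubeComp, Pi.smul_apply, MonoidalLinear.whiskerLeft_smul,
        Linear.comp_smul, Linear.smul_comp, Finset.smul_sum]
    · funext t
      simp only [tubeComp, Pi.smul_apply, MonoidalLinear.smul_whiskerRight,
        Linear.comp_smul, Linear.smul_comp, Finset.smul_sum]
  · -- associativity
    intro W X Y Z f g h
    funext t
    simp only [tubeComp, whiskerLeft_sum, sum_whiskerRight, Preadditive.comp_sum,
      Preadditive.sum_comp]
    refine (reorder6L _).trans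
      ((Finset.sum_congr rfl fun s _ => Finset.sum_congr rfl fun q _ =>
        Finset.sum_congr rfl fun r _ =>
          assoc_key e he hdualB hsimp hdist i0 u hBb hcomp hss t s q r
            (f r) (g q) (h s)).trans
        (reorder6R _).symm)
  · -- unit laws
    intro X Y f
    constructor
    · -- left unit
      funext t
      simp only [tubeComp]
      have hterm : ∀ (s : ι) (p : κ t s i0),
          (Bb t s i0 p ▷ X) ≫ (α_ (Ss s) (Ss i0) X).hom ≫
            (Ss s ◁ tubeId Ss i0 u X i0) ≫ (α_ (Ss s) X (Ss i0)).inv ≫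
            (f s ▷ Ss i0) ≫ (α_ Y (Ss s) (Ss i0)).hom ≫ (Y ◁ Bd t s i0 p)
          = ((Bb t s i0 p ≫ (Ss s ◁ u.hom) ≫ (ρ_ (Ss s)).hom) ▷ X) ≫ f s ≫
            (Y ◁ ((ρ_ (Ss s)).inv ≫ (Ss s ◁ u.inv) ≫ Bd t s i0 p)) := by
        intro s p
        rw [tubeId, dif_pos rfl]
        simp only [eqToHom_refl, Category.id_comp, Category.comp_id]
        exact lunit_coh u.hom u.inv (Bb t s i0 p) (Bd t s i0 p) (f s)
      calc ∑ s : ι, ∑ r : ι, ∑ p : κ t s r,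
            (Bb t s r p ▷ X) ≫ (α_ (Ss s) (Ss r) X).hom ≫
              (Ss s ◁ tubeId Ss i0 u X r) ≫ (α_ (Ss s) X (Ss r)).inv ≫
              (f s ▷ Ss r) ≫ (α_ Y (Ss s) (Ss r)).hom ≫ (Y ◁ Bd t s r p)
          = ∑ s : ι, ∑ p : κ t s i0,
            ((Bb t s i0 p ≫ (Ss s ◁ u.hom) ≫ (ρ_ (Ss s)).hom) ▷ X) ≫ f s ≫
              (Y ◁ ((ρ_ (Ss s)).inv ≫ (Ss s ◁ u.inv) ≫ Bd t s i0 p)) := by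
            refine Finset.sum_congr rfl fun s _ => ?_
            refine (Finset.sum_eq_single i0 (fun r _ hr => ?_)
              (fun hmem => absurd (Finset.mem_univ i0) hmem)).trans ?_
            · refine Finset.sum_eq_zero fun p _ => ?_
              rw [tubeId, dif_neg hr]
              simp
            · exact Finset.sum_congr rfl fun p _ => hterm s p
        _ = f t := by
            refine (Finset.sum_eq_single t (fun s _ hs => ?_)
              (fun hmem => absurd (Finset.mem_univ t) hmem)).trans ?_
            · haveI := kappa_right_empty (Bb := Bb) (Bd := Bd) e he hdualB hsimp hdist
                i0 u (fun hh => hs hh.symm)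
              rw [Finset.univ_eq_empty, Finset.sum_empty]
            · haveI hsub := kappa_right_subsingleton (Bb := Bb) (Bd := Bd) e he hdualB i0 u t
              obtain ⟨p0⟩ := kappa_right_nonempty (Bb := Bb) hsimp hBb i0 u t
              refine (Finset.sum_eq_single p0
                (fun p _ hp => absurd (Subsingleton.elim p p0) hp)
                (fun hmem => absurd (Finset.mem_univ p0) hmem)).trans ?_
              refine scalar_term e he t _ _ ?_ (f t)
              have hid : (Bb t t i0 p0 ≫ (Ss t ◁ u.hom) ≫ (ρ_ (Ss t)).hom) ≫
                  ((ρ_ (Ss t)).inv ≫ (Ss t ◁ u.inv) ≫ Bd t t i0 p0)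
                  = Bb t t i0 p0 ≫ Bd t t i0 p0 := by simp
              rw [hid, hdualB, if_pos rfl]
    · -- right unit
      funext t
      simp only [tubeComp]
      have hterm : ∀ (r : ι) (p : κ t i0 r),
          (Bb t i0 r p ▷ X) ≫ (α_ (Ss i0) (Ss r) X).hom ≫ (Ss i0 ◁ f r) ≫
            (α_ (Ss i0) Y (Ss r)).inv ≫ (tubeId Ss i0 u Y i0 ▷ Ss r) ≫
            (α_ Y (Ss i0) (Ss r)).hom ≫ (Y ◁ Bd t i0 r p)
          = ((Bb t i0 r p ≫ (u.hom ▷ Ss r) ≫ (λ_ (Ss r)).hom) ▷ X) ≫ f r ≫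
            (Y ◁ ((λ_ (Ss r)).inv ≫ (u.inv ▷ Ss r) ≫ Bd t i0 r p)) := by
        intro r p
        rw [tubeId, dif_pos rfl]
        simp only [eqToHom_refl, Category.id_comp, Category.comp_id]
        exact runit_coh (Bb t i0 r p) (Bd t i0 r p) (f r) u.hom u.inv
      calc ∑ s : ι, ∑ r : ι, ∑ p : κ t s r,
            (Bb t s r p ▷ X) ≫ (α_ (Ss s) (Ss r) X).hom ≫ (Ss s ◁ f r) ≫
              (α_ (Ss s) Y (Ss r)).inv ≫ (tubeId Ss i0 u Y s ▷ Ss r) ≫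
              (α_ Y (Ss s) (Ss r)).hom ≫ (Y ◁ Bd t s r p)
          = ∑ r : ι, ∑ p : κ t i0 r,
            ((Bb t i0 r p ≫ (u.hom ▷ Ss r) ≫ (λ_ (Ss r)).hom) ▷ X) ≫ f r ≫
              (Y ◁ ((λ_ (Ss r)).inv ≫ (u.inv ▷ Ss r) ≫ Bd t i0 r p)) := by
            refine (Finset.sum_eq_single i0 (fun s _ hs => ?_)
              (fun hmem => absurd (Finset.mem_univ i0) hmem)).trans ?_
            · refine Finset.sum_eq_zero fun r _ => Finset.sum_eq_zero fun p _ => ?_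
              rw [tubeId, dif_neg hs]
              simp
            · exact Finset.sum_congr rfl fun r _ => Finset.sum_congr rfl fun p _ =>
                hterm r p
        _ = f t := by
            refine (Finset.sum_eq_single t (fun r _ hr => ?_)
              (fun hmem => absurd (Finset.mem_univ t) hmem)).trans ?_
            · haveI := kappa_left_empty (Bb := Bb) (Bd := Bd) e he hdualB hsimp hdist
                i0 u (fun hh => hr hh.symm)
              rw [Finset.univ_eq_empty, Finset.sum_empty]
            · haveI hsub := kappa_left_subsingleton (Bb := Bb) (Bd := Bd) e he hdualB i0 u t
              obtain ⟨p0⟩ := kappa_left_nonempty (Bb := Bb) hsimp hBb i0 u t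
              refine (Finset.sum_eq_single p0
                (fun p _ hp => absurd (Subsingleton.elim p p0) hp)
                (fun hmem => absurd (Finset.mem_univ p0) hmem)).trans ?_
              refine scalar_term e he t _ _ ?_ (f t)
              have hid : (Bb t i0 t p0 ≫ (u.hom ▷ Ss t) ≫ (λ_ (Ss t)).hom) ≫
                  ((λ_ (Ss t)).inv ≫ (u.inv ▷ Ss t) ≫ Bd t i0 t p0)
                  = Bb t i0 t p0 ≫ Bd t i0 t p0 := by simp
              rw [hid, hdualB, if_pos rfl]
end
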